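/- arXiv:0711.1017 — 5 statements merged into one kernel-verified Lean document; each statement's English description precedes it below -/
import Mathlib

section
/- For any finite weighted set (𝒮, w), 𝒮 ⊂ U(d), with ∑ₓ w(x) = 1, and any t ≥ 1: ∑_{x,y∈𝒮} w(x)w(y) |tr(U(x)†U(y))|^{2t} ≥ ∫∫ dμ(U)dμ(V) |tr(U†V)|^{2t} = ∫ dμ(U)|tr(U)|^{2t}, with equality iff (𝒮, w) is a weighted unitary t-design. -/
/-!
The Frobenius inner product `tr(A†B)` of the moment operators `U^{⊗t} ⊗ (U^{⊗t})†` and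
`V^{⊗t} ⊗ (V^{⊗t})†` factors as `tr((U^{⊗t})† V^{⊗t}) · tr(U^{⊗t} (V^{⊗t})†) = |tr(U†V)|^{2t}`,
and left invariance of `μ` makes `∫ |tr(x†U)|^{2t} dμ(U)` independent of `x`. So if `S` is the
difference between the weighted and the Haar moment operators, `tr(S†S)` expands to the difference
of the two sides of the bound; it is `≥ 0`, and `= 0` exactly when `S = 0`.
-/

open MeasureTheory Matrix

/-- The `t`-th moment kernel `U^{⊗t} ⊗ (U^{⊗t})†` of a matrix `U`, written entrywise. -/
noncomputable def mom (d t : ℕ) (U : Matrix (Fin d) (Fin d) ℂ)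
    (p q : (Fin t → Fin d) × (Fin t → Fin d)) : ℂ :=
  (∏ i, U (p.1 i) (q.1 i)) * (starRingEnd ℂ) (∏ i, U (q.2 i) (p.2 i))

open scoped Kronecker ComplexConjugate ComplexOrder

namespace Matrix

variable {ι l m n R : Type*} [Fintype ι]

def tensorPower (ι : Type*) [Fintype ι] [CommMonoid R] (A : Matrix m n R) :
    Matrix (ι → m) (ι → n) R :=
  of fun f g => ∏ i, A (f i) (g i)

@[simp]
theorem tensorPower_apply [CommMonoid R] (A : Matrix m n R) (f : ι → m) (g : ι → n) :
    tensorPower ι A f g = ∏ i, A (f i) (g i) :=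
  rfl

theorem tensorPower_mul [CommSemiring R] [Fintype m] [DecidableEq ι] (A : Matrix l m R)
    (B : Matrix m n R) : tensorPower ι (A * B) = tensorPower ι A * tensorPower ι B := by
  ext f g
  simp only [tensorPower_apply, mul_apply, Fintype.prod_sum, Finset.prod_mul_distrib]

theorem conjTranspose_tensorPower [CommSemiring R] [StarRing R] (A : Matrix m n R) :
    (tensorPower ι A)ᴴ = tensorPower ι Aᴴ := by
  ext f g
  simp [star_prod]

theorem trace_tensorPower [CommSemiring R] [Fintype m] [DecidableEq ι] (A : Matrix m m R) :
    (tensorPower ι A).trace = A.trace ^ Fintype.card ι := by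
  simp only [trace, diag, tensorPower_apply]
  rw [← Finset.card_univ, ← Finset.prod_const, Fintype.prod_sum]

theorem norm_tensorPower_apply_le_one {𝕜 : Type*} [RCLike 𝕜] [Fintype m] [DecidableEq m]
    {U : Matrix m m 𝕜} (hU : U ∈ unitaryGroup m 𝕜) (f g : ι → m) :
    ‖tensorPower ι U f g‖ ≤ 1 := by
  rw [tensorPower_apply, norm_prod]
  exact Finset.prod_le_one (fun _ _ => norm_nonneg _) fun _ _ => entry_norm_bound_of_unitary hU _ _

theorem trace_conjTranspose_mul_eq_star [Fintype m] [Fintype n] [NonUnitalSemiring R]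
    [StarRing R] (A B : Matrix m n R) : (Aᴴ * B).trace = star (Bᴴ * A).trace := by
  rw [← trace_conjTranspose, conjTranspose_mul, conjTranspose_conjTranspose]

theorem trace_conjTranspose_sub_mul_sub [Fintype m] [Fintype n] [CommRing R] [StarRing R]
    {X Y : Matrix m n R} {c : R} (hc : star c = c) (hXY : (Xᴴ * Y).trace = c)
    (hYY : (Yᴴ * Y).trace = c) : ((X - Y)ᴴ * (X - Y)).trace = (Xᴴ * X).trace - c := by
  have hYX : (Yᴴ * X).trace = c := by rw [trace_conjTranspose_mul_eq_star, hXY, hc]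
  rw [conjTranspose_sub, Matrix.sub_mul, Matrix.mul_sub, Matrix.mul_sub, trace_sub, trace_sub,
    trace_sub, hXY, hYX, hYY]
  ring

end Matrix

section Moments

variable {n : Type*} [Fintype n] {t : ℕ}

noncomputable def momentMatrix (t : ℕ) (U : Matrix n n ℂ) :
    Matrix ((Fin t → n) × (Fin t → n)) ((Fin t → n) × (Fin t → n)) ℂ :=
  tensorPower (Fin t) U ⊗ₖ (tensorPower (Fin t) U)ᴴ

theorem momentMatrix_apply {d : ℕ} (U : Matrix (Fin d) (Fin d) ℂ)
    (p q : (Fin t → Fin d) × (Fin t → Fin d)) : momentMatrix t U p q = mom d t U p q :=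
  rfl

theorem trace_conjTranspose_momentMatrix_mul_momentMatrix (U V : Matrix n n ℂ) :
    ((momentMatrix t U)ᴴ * momentMatrix t V).trace = (‖(Uᴴ * V).trace‖ ^ (2 * t) : ℝ) := by
  have hconj : (U * Vᴴ).trace = conj (Uᴴ * V).trace := by
    rw [trace_mul_comm, trace_conjTranspose_mul_eq_star, Complex.star_def]
  rw [momentMatrix, momentMatrix, conjTranspose_kronecker, conjTranspose_conjTranspose,
    ← mul_kronecker_mul, trace_kronecker, conjTranspose_tensorPower, conjTranspose_tensorPower,
    ← tensorPower_mul, ← tensorPower_mul, trace_tensorPower, trace_tensorPower, Fintype.card_fin,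
    hconj, ← mul_pow, Complex.mul_conj', pow_mul]
  norm_cast

variable [DecidableEq n]

theorem norm_momentMatrix_apply_le_one (U : unitaryGroup n ℂ)
    (p q : (Fin t → n) × (Fin t → n)) : ‖momentMatrix t (U : Matrix n n ℂ) p q‖ ≤ 1 := by
  rw [momentMatrix, kronecker_apply, conjTranspose_apply, norm_mul, norm_star]
  exact mul_le_one₀ (norm_tensorPower_apply_le_one U.2 _ _) (norm_nonneg _)
    (norm_tensorPower_apply_le_one U.2 _ _)

theorem continuous_momentMatrix_apply (p q : (Fin t → n) × (Fin t → n)) :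
    Continuous fun U : unitaryGroup n ℂ => momentMatrix t (U : Matrix n n ℂ) p q := by
  have hentry i j : Continuous fun U : unitaryGroup n ℂ => (U : Matrix n n ℂ) i j :=
    continuous_subtype_val.matrix_elem i j
  simp only [momentMatrix, kroneckerMap_apply, conjTranspose_apply, tensorPower_apply]
  exact (continuous_finsetProd _ fun _ _ => hentry _ _).mul
    (continuous_finsetProd _ fun _ _ => hentry _ _).star

noncomputable def weightedMoment (t : ℕ) (s : Finset (unitaryGroup n ℂ))
    (w : unitaryGroup n ℂ → ℝ) :
    Matrix ((Fin t → n) × (Fin t → n)) ((Fin t → n) × (Fin t → n)) ℂ :=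
  ∑ x ∈ s, (w x : ℂ) • momentMatrix t (x : Matrix n n ℂ)

theorem trace_conjTranspose_weightedMoment_mul_self (s : Finset (unitaryGroup n ℂ))
    (w : unitaryGroup n ℂ → ℝ) :
    ((weightedMoment t s w)ᴴ * weightedMoment t s w).trace
      = ((∑ x ∈ s, ∑ y ∈ s,
          w x * w y * ‖((x : Matrix n n ℂ)ᴴ * (y : Matrix n n ℂ)).trace‖ ^ (2 * t) : ℝ) : ℂ) := by
  simp only [weightedMoment, conjTranspose_sum, conjTranspose_smul, Finset.sum_mul_sum,
    smul_mul_smul, trace_sum, trace_smul, trace_conjTranspose_momentMatrix_mul_momentMatrix,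
    Complex.star_def, Complex.conj_ofReal, smul_eq_mul]
  norm_cast

noncomputable def haarMoment [MeasurableSpace (unitaryGroup n ℂ)] (μ : Measure (unitaryGroup n ℂ))
    (t : ℕ) : Matrix ((Fin t → n) × (Fin t → n)) ((Fin t → n) × (Fin t → n)) ℂ :=
  of fun p q => ∫ U, momentMatrix t (U : Matrix n n ℂ) p q ∂μ

variable [MeasurableSpace (unitaryGroup n ℂ)] [BorelSpace (unitaryGroup n ℂ)]
  (μ : Measure (unitaryGroup n ℂ))

theorem integrable_momentMatrix_apply [IsFiniteMeasure μ] (p q : (Fin t → n) × (Fin t → n)) :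
    Integrable (fun U : unitaryGroup n ℂ => momentMatrix t (U : Matrix n n ℂ) p q) μ :=
  .of_bound (continuous_momentMatrix_apply p q).aestronglyMeasurable 1
    (.of_forall fun U => norm_momentMatrix_apply_le_one U p q)

theorem trace_mul_haarMoment [IsFiniteMeasure μ]
    (A : Matrix ((Fin t → n) × (Fin t → n)) ((Fin t → n) × (Fin t → n)) ℂ) :
    (A * haarMoment μ t).trace = ∫ U, (A * momentMatrix t (U : Matrix n n ℂ)).trace ∂μ := by
  have hint := integrable_momentMatrix_apply (t := t) μ
  simp only [trace, diag, mul_apply, haarMoment, of_apply]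
  rw [integral_finsetSum _ fun i _ => integrable_finsetSum _ fun j _ => (hint j i).const_mul (A i j)]
  refine Finset.sum_congr rfl fun i _ => ?_
  rw [integral_finsetSum _ fun j _ => (hint j i).const_mul (A i j)]
  simp only [integral_const_mul]

variable [μ.IsMulLeftInvariant]

theorem integral_conjTranspose_mul_eq_self {E : Type*} [NormedAddCommGroup E] [NormedSpace ℝ E]
    (f : Matrix n n ℂ → E) (x : unitaryGroup n ℂ) :
    ∫ U, f ((x : Matrix n n ℂ)ᴴ * U) ∂μ = ∫ U, f U ∂μ :=
  integral_mul_left_eq_self (fun U : unitaryGroup n ℂ => f U) x⁻¹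

theorem trace_conjTranspose_momentMatrix_mul_haarMoment [IsFiniteMeasure μ]
    (x : unitaryGroup n ℂ) :
    ((momentMatrix t (x : Matrix n n ℂ))ᴴ * haarMoment μ t).trace
      = ((∫ U, ‖(U : Matrix n n ℂ).trace‖ ^ (2 * t) ∂μ : ℝ) : ℂ) := by
  simp only [trace_mul_haarMoment, trace_conjTranspose_momentMatrix_mul_momentMatrix,
    integral_complex_ofReal, integral_conjTranspose_mul_eq_self μ (fun V => ‖V.trace‖ ^ (2 * t)) x]

variable [IsProbabilityMeasure μ]

theorem trace_conjTranspose_haarMoment_mul_self :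
    ((haarMoment μ t)ᴴ * haarMoment μ t).trace
      = ((∫ U, ‖(U : Matrix n n ℂ).trace‖ ^ (2 * t) ∂μ : ℝ) : ℂ) := by
  rw [trace_mul_haarMoment]
  simp only [trace_conjTranspose_mul_eq_star _ (momentMatrix _ _),
    trace_conjTranspose_momentMatrix_mul_haarMoment, Complex.star_def, Complex.conj_ofReal,
    integral_const, probReal_univ, one_smul]

theorem trace_conjTranspose_weightedMoment_mul_haarMoment {s : Finset (unitaryGroup n ℂ)}
    {w : unitaryGroup n ℂ → ℝ} (hw : ∑ x ∈ s, w x = 1) :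
    ((weightedMoment t s w)ᴴ * haarMoment μ t).trace
      = ((∫ U, ‖(U : Matrix n n ℂ).trace‖ ^ (2 * t) ∂μ : ℝ) : ℂ) := by
  simp only [weightedMoment, conjTranspose_sum, conjTranspose_smul, Finset.sum_mul, smul_mul,
    trace_sum, trace_smul, trace_conjTranspose_momentMatrix_mul_haarMoment, Complex.star_def,
    Complex.conj_ofReal, smul_eq_mul]
  rw [← Finset.sum_mul, ← Complex.ofReal_sum, hw, Complex.ofReal_one, one_mul]

end Moments

theorem welch_bound_unitary_general (d t : ℕ)
    [MeasurableSpace (Matrix.unitaryGroup (Fin d) ℂ)]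
    [BorelSpace (Matrix.unitaryGroup (Fin d) ℂ)]
    (μ : Measure (Matrix.unitaryGroup (Fin d) ℂ)) [μ.IsHaarMeasure] [IsProbabilityMeasure μ]
    (s : Finset (Matrix.unitaryGroup (Fin d) ℂ)) (w : Matrix.unitaryGroup (Fin d) ℂ → ℝ)
    (hwsum : ∑ x ∈ s, w x = 1) :
    (∫ U, ∫ V, ‖((U : Matrix (Fin d) (Fin d) ℂ)ᴴ * (V : Matrix (Fin d) (Fin d) ℂ)).trace‖ ^ (2 * t) ∂μ ∂μ
        = ∫ U, ‖(U : Matrix (Fin d) (Fin d) ℂ).trace‖ ^ (2 * t) ∂μ) ∧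
    (∫ U, ‖(U : Matrix (Fin d) (Fin d) ℂ).trace‖ ^ (2 * t) ∂μ
        ≤ ∑ x ∈ s, ∑ y ∈ s,
            w x * w y * ‖((x : Matrix (Fin d) (Fin d) ℂ)ᴴ * (y : Matrix (Fin d) (Fin d) ℂ)).trace‖ ^ (2 * t)) ∧
    ((∑ x ∈ s, ∑ y ∈ s,
          w x * w y * ‖((x : Matrix (Fin d) (Fin d) ℂ)ᴴ * (y : Matrix (Fin d) (Fin d) ℂ)).trace‖ ^ (2 * t)
        = ∫ U, ‖(U : Matrix (Fin d) (Fin d) ℂ).trace‖ ^ (2 * t) ∂μ) ↔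
      (∀ p q, ∑ x ∈ s, (w x : ℂ) * mom d t (x : Matrix (Fin d) (Fin d) ℂ) p q
        = ∫ U, mom d t (U : Matrix (Fin d) (Fin d) ℂ) p q ∂μ)) := by
  set S := weightedMoment t s w - haarMoment μ t
  have hS : (Sᴴ * S).trace = ((∑ x ∈ s, ∑ y ∈ s, w x * w y *
      ‖((x : Matrix (Fin d) (Fin d) ℂ)ᴴ * (y : Matrix (Fin d) (Fin d) ℂ)).trace‖ ^ (2 * t)
      - ∫ U, ‖(U : Matrix (Fin d) (Fin d) ℂ).trace‖ ^ (2 * t) ∂μ : ℝ) : ℂ) := by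
    rw [trace_conjTranspose_sub_mul_sub (Complex.conj_ofReal _)
      (trace_conjTranspose_weightedMoment_mul_haarMoment μ hwsum)
      (trace_conjTranspose_haarMoment_mul_self μ), trace_conjTranspose_weightedMoment_mul_self,
      Complex.ofReal_sub]
  have hdesign : (∀ p q, ∑ x ∈ s, (w x : ℂ) * mom d t (x : Matrix (Fin d) (Fin d) ℂ) p q
      = ∫ U, mom d t (U : Matrix (Fin d) (Fin d) ℂ) p q ∂μ) ↔ S = 0 := by
    simp only [S, sub_eq_zero, ← Matrix.ext_iff, weightedMoment, haarMoment, Matrix.sum_apply,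
      Matrix.smul_apply, of_apply, momentMatrix_apply, smul_eq_mul]
  refine ⟨?_, ?_, ?_⟩
  · simp only [integral_conjTranspose_mul_eq_self μ (fun V => ‖V.trace‖ ^ (2 * t)),
      integral_const, probReal_univ, one_smul]
  · have htrace_nonneg := (posSemidef_conjTranspose_mul_self S).trace_nonneg
    rwa [hS, Complex.zero_le_real, sub_nonneg] at htrace_nonneg
  · rw [hdesign, ← trace_conjTranspose_mul_self_eq_zero_iff, hS, Complex.ofReal_eq_zero,
      sub_eq_zero]

/-- Welch-type bound: for any finite weighted set `(𝒮, w)` in `U(d)` with `∑ w(x) = 1`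
and any `t ≥ 1`,
`∑_{x,y} w(x) w(y) |tr(U(x)† U(y))|^{2t} ≥ ∫∫ |tr(U†V)|^{2t} dμ dμ = ∫ |tr U|^{2t} dμ`,
with equality if and only if `(𝒮, w)` is a weighted unitary `t`-design. -/
theorem welch_bound_unitary (d t : ℕ) (hd : 0 < d) (ht : 1 ≤ t)
    [MeasurableSpace (Matrix.unitaryGroup (Fin d) ℂ)]
    [BorelSpace (Matrix.unitaryGroup (Fin d) ℂ)]
    (μ : Measure (Matrix.unitaryGroup (Fin d) ℂ)) [μ.IsHaarMeasure] [IsProbabilityMeasure μ]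
    (s : Finset (Matrix.unitaryGroup (Fin d) ℂ)) (w : Matrix.unitaryGroup (Fin d) ℂ → ℝ)
    (hw : ∀ x ∈ s, 0 < w x) (hwsum : ∑ x ∈ s, w x = 1) :
    (∫ U, ∫ V, ‖((U : Matrix (Fin d) (Fin d) ℂ)ᴴ * (V : Matrix (Fin d) (Fin d) ℂ)).trace‖ ^ (2 * t) ∂μ ∂μ
        = ∫ U, ‖(U : Matrix (Fin d) (Fin d) ℂ).trace‖ ^ (2 * t) ∂μ) ∧
    (∫ U, ‖(U : Matrix (Fin d) (Fin d) ℂ).trace‖ ^ (2 * t) ∂μ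
        ≤ ∑ x ∈ s, ∑ y ∈ s,
            w x * w y * ‖((x : Matrix (Fin d) (Fin d) ℂ)ᴴ * (y : Matrix (Fin d) (Fin d) ℂ)).trace‖ ^ (2 * t)) ∧
    ((∑ x ∈ s, ∑ y ∈ s,
          w x * w y * ‖((x : Matrix (Fin d) (Fin d) ℂ)ᴴ * (y : Matrix (Fin d) (Fin d) ℂ)).trace‖ ^ (2 * t)
        = ∫ U, ‖(U : Matrix (Fin d) (Fin d) ℂ).trace‖ ^ (2 * t) ∂μ) ↔
      (∀ p q, ∑ x ∈ s, (w x : ℂ) * mom d t (x : Matrix (Fin d) (Fin d) ℂ) p q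
        = ∫ U, mom d t (U : Matrix (Fin d) (Fin d) ℂ) p q ∂μ)) :=
  welch_bound_unitary_general d t μ s w hwsum
end

section
/- The Haar average ∫_{U(d)} dμ(U) U ⊗ U† equals T/d, where T = ∑_{j,k} |j⟩⟨k| ⊗ |k⟩⟨j| is the swap operator on ℂ^d ⊗ ℂ^d. -/
/-!
Left translation by the diagonal unitary that flips the sign of row `a` negates
`∫ U a b · conj (U a' b')` when `a ≠ a'`, so these moments vanish; translation by the
permutation matrix swapping two rows shows that `∫ U a b · conj (U a b')` does not depend on `a`.
Summing over `a` and using that the columns of `U` are orthonormal gives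
`d · ∫ U a b · conj (U a b') = δ_{b b'}`.
-/

open MeasureTheory Matrix
open scoped ComplexConjugate

namespace Matrix

variable {n α : Type*} [Fintype n] [DecidableEq n] [CommRing α] [StarRing α]

theorem diagonal_mem_unitaryGroup {v : n → α} (hv : ∀ i, star (v i) * v i = 1) :
    diagonal v ∈ unitaryGroup n α := by
  rw [mem_unitaryGroup_iff', star_eq_conjTranspose, diagonal_conjTranspose,
    diagonal_mul_diagonal, ← diagonal_one]
  exact congrArg diagonal (funext hv)

theorem swap_mem_unitaryGroup (i j : n) : swap α i j ∈ unitaryGroup n α := by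
  rw [mem_unitaryGroup_iff', star_eq_conjTranspose, conjTranspose_swap, swap_mul_self]

theorem UnitaryGroup.sum_mul_star_apply (U : unitaryGroup n α) (b b' : n) :
    ∑ m, (U : Matrix n n α) m b * star ((U : Matrix n n α) m b') = (1 : Matrix n n α) b' b := by
  rw [← UnitaryGroup.star_mul_self U, Matrix.mul_apply]
  exact Finset.sum_congr rfl fun m _ => mul_comm _ _

end Matrix

section SecondMoment

variable {n : Type*} [Fintype n] [DecidableEq n]
  [MeasurableSpace (unitaryGroup n ℂ)] [BorelSpace (unitaryGroup n ℂ)]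
  (μ : Measure (unitaryGroup n ℂ))

noncomputable def secondMoment (a b a' b' : n) : ℂ :=
  ∫ U, (U : Matrix n n ℂ) a b * conj ((U : Matrix n n ℂ) a' b') ∂μ

theorem integrable_entry_mul_conj_entry [IsFiniteMeasure μ] (a b a' b' : n) :
    Integrable (fun U : unitaryGroup n ℂ =>
      (U : Matrix n n ℂ) a b * conj ((U : Matrix n n ℂ) a' b')) μ := by
  have hcont : Continuous fun U : unitaryGroup n ℂ =>
      (U : Matrix n n ℂ) a b * conj ((U : Matrix n n ℂ) a' b') :=
    (continuous_subtype_val.matrix_elem a b).mul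
      (Complex.continuous_conj.comp (continuous_subtype_val.matrix_elem a' b'))
  refine Integrable.of_bound hcont.aestronglyMeasurable 1 (ae_of_all _ fun U => ?_)
  rw [norm_mul, RCLike.norm_conj, ← one_mul (1 : ℝ)]
  exact mul_le_mul (entry_norm_bound_of_unitary U.2 a b) (entry_norm_bound_of_unitary U.2 a' b')
    (norm_nonneg _) zero_le_one

theorem sum_secondMoment_diag [IsProbabilityMeasure μ] (b b' : n) :
    ∑ m, secondMoment μ m b m b' = (1 : Matrix n n ℂ) b' b := by
  simp only [secondMoment]
  rw [← integral_finsetSum _ fun m _ => integrable_entry_mul_conj_entry μ m b m b']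
  simp only [starRingEnd_apply, UnitaryGroup.sum_mul_star_apply, integral_const, probReal_univ,
    one_smul]

variable {μ} [μ.IsMulLeftInvariant]

theorem secondMoment_mul_left (V : unitaryGroup n ℂ) (a b a' b' : n) :
    ∫ U, ((V * U : unitaryGroup n ℂ) : Matrix n n ℂ) a b
      * conj (((V * U : unitaryGroup n ℂ) : Matrix n n ℂ) a' b') ∂μ = secondMoment μ a b a' b' :=
  integral_mul_left_eq_self (fun U : unitaryGroup n ℂ =>
    (U : Matrix n n ℂ) a b * conj ((U : Matrix n n ℂ) a' b')) V

theorem secondMoment_eq_zero_of_ne {a a' : n} (h : a ≠ a') (b b' : n) :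
    secondMoment μ a b a' b' = 0 := by
  let s : n → ℂ := fun i => if i = a then -1 else 1
  have hs : ∀ i, star (s i) * s i = 1 := fun i => by by_cases hi : i = a <;> simp [s, hi]
  have hneg := secondMoment_mul_left (μ := μ) ⟨diagonal s, diagonal_mem_unitaryGroup hs⟩ a b a' b'
  simp only [UnitaryGroup.mul_val, diagonal_mul, s, if_true, if_neg h.symm, one_mul, neg_mul,
    integral_neg] at hneg
  rw [secondMoment] at hneg ⊢
  linear_combination -hneg / 2

theorem secondMoment_diag_row_eq (a₁ a₂ b b' : n) :
    secondMoment μ a₁ b a₁ b' = secondMoment μ a₂ b a₂ b' := by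
  have h := secondMoment_mul_left (μ := μ) ⟨swap ℂ a₁ a₂, swap_mem_unitaryGroup a₁ a₂⟩ a₁ b a₁ b'
  simp only [UnitaryGroup.mul_val, swap_mul_apply_left] at h
  exact h.symm

theorem card_mul_secondMoment_diag [IsProbabilityMeasure μ] (a b b' : n) :
    Fintype.card n * secondMoment μ a b a b' = (1 : Matrix n n ℂ) b' b := by
  rw [← sum_secondMoment_diag μ, Finset.sum_congr rfl fun m _ => secondMoment_diag_row_eq m a b b',
    Finset.sum_const, Finset.card_univ, nsmul_eq_mul]

theorem secondMoment_eq [IsProbabilityMeasure μ] (a b a' b' : n) :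
    secondMoment μ a b a' b' = if a = a' ∧ b' = b then (Fintype.card n : ℂ)⁻¹ else 0 := by
  obtain rfl | ha := eq_or_ne a a'
  · have hcard : (Fintype.card n : ℂ) ≠ 0 := Nat.cast_ne_zero.2 (Fintype.card_pos_iff.2 ⟨a⟩).ne'
    have h := card_mul_secondMoment_diag (μ := μ) a b b'
    rw [one_apply] at h
    simp only [true_and]
    split_ifs at h ⊢
    · exact eq_inv_of_mul_eq_one_right h
    · exact (mul_eq_zero.1 h).resolve_left hcard
  · simp [ha, secondMoment_eq_zero_of_ne ha]

end SecondMoment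

theorem haar_average_U_tensor_Udag_general (d : ℕ)
    [MeasurableSpace (Matrix.unitaryGroup (Fin d) ℂ)]
    [BorelSpace (Matrix.unitaryGroup (Fin d) ℂ)]
    (μ : Measure (Matrix.unitaryGroup (Fin d) ℂ)) [μ.IsHaarMeasure] [IsProbabilityMeasure μ]
    (j j' k k' : Fin d) :
    (∫ U, (U : Matrix (Fin d) (Fin d) ℂ) j k * conj ((U : Matrix (Fin d) (Fin d) ℂ) k' j') ∂μ)
      = if j = k' ∧ j' = k then ((d : ℂ))⁻¹ else 0 :=
  (secondMoment_eq j k k' j').trans (by rw [Fintype.card_fin])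

/-- The Haar average `∫ U ⊗ U† dμ(U)` over `U(d)` equals `T/d`, where
`T = ∑_{j,k} |j⟩⟨k| ⊗ |k⟩⟨j|` is the swap operator on `ℂ^d ⊗ ℂ^d`.  Entrywise:
the `((j,j'),(k,k'))` entry of `U ⊗ U†` is `U j k · conj (U k' j')` and that of `T/d`
is `(1/d) δ_{j k'} δ_{j' k}`. -/
theorem haar_average_U_tensor_Udag (d : ℕ) (hd : 0 < d)
    [MeasurableSpace (Matrix.unitaryGroup (Fin d) ℂ)]
    [BorelSpace (Matrix.unitaryGroup (Fin d) ℂ)]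
    (μ : Measure (Matrix.unitaryGroup (Fin d) ℂ)) [μ.IsHaarMeasure] [IsProbabilityMeasure μ]
    (j j' k k' : Fin d) :
    (∫ U, (U : Matrix (Fin d) (Fin d) ℂ) j k * conj ((U : Matrix (Fin d) (Fin d) ℂ) k' j') ∂μ)
      = if j = k' ∧ j' = k then ((d : ℂ))⁻¹ else 0 :=
  haar_average_U_tensor_Udag_general d μ j j' k k'
end

section
/- Any weighted unitary 1-design (𝒟, w) in dimension d satisfies |𝒟| ≥ d², with equality only if 𝒟 is an orthogonal unitary operator basis (tr(U(x)†U(y)) = 0 for all x ≠ y in 𝒟) and w(x) = 1/|𝒟| for all x. -/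
open Matrix
open scoped ComplexConjugate

/-- Any weighted unitary 1-design `(𝒟, w)` in dimension `d` (i.e. a finite weighted set
of unitaries with `∑ₓ w(x) U(x) ⊗ U(x)† = T/d`, written entrywise) satisfies
`|𝒟| ≥ d²`, with equality only if `𝒟` is an orthogonal unitary operator basis
(`tr(U(x)†U(y)) = 0` for `x ≠ y`) and the weights are uniform, `w(x) = 1/|𝒟|`. -/
theorem weighted_unitary_one_design_card (d : ℕ) (hd : 0 < d)
    (s : Finset (Matrix.unitaryGroup (Fin d) ℂ)) (w : Matrix.unitaryGroup (Fin d) ℂ → ℝ)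
    (hw : ∀ x ∈ s, 0 < w x) (hwsum : ∑ x ∈ s, w x = 1)
    (hdes : ∀ j k j' k' : Fin d,
      ∑ x ∈ s, (w x : ℂ) * ((x : Matrix (Fin d) (Fin d) ℂ) j k
          * conj ((x : Matrix (Fin d) (Fin d) ℂ) k' j'))
        = if j = k' ∧ j' = k then ((d : ℂ))⁻¹ else 0) :
    d ^ 2 ≤ s.card ∧
      (s.card = d ^ 2 →
        (∀ x ∈ s, ∀ y ∈ s, x ≠ y →
            ((x : Matrix (Fin d) (Fin d) ℂ)ᴴ * (y : Matrix (Fin d) (Fin d) ℂ)).trace = 0) ∧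
          ∀ x ∈ s, w x = 1 / s.card) := by
  classical
  have hd0 : (d : ℂ) ≠ 0 := Nat.cast_ne_zero.mpr hd.ne'
  set U : Matrix.unitaryGroup (Fin d) ℂ → Matrix (Fin d) (Fin d) ℂ := fun x => ↑x with hUdef
  -- key expansion: every matrix is reconstructed from the design
  have key : ∀ M : Matrix (Fin d) (Fin d) ℂ,
      ∑ x ∈ s, ((d : ℂ) * (w x : ℂ) * ((U x)ᴴ * M).trace) • U x = M := by
    intro M
    ext j k
    have h1 : ∀ x : Matrix.unitaryGroup (Fin d) ℂ,
        ((U x)ᴴ * M).trace = ∑ p, ∑ q, conj (U x q p) * M q p := by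
      intro x
      simp [Matrix.trace, Matrix.mul_apply, Matrix.conjTranspose_apply, Matrix.diag]
    calc (∑ x ∈ s, ((d:ℂ) * (w x : ℂ) * ((U x)ᴴ * M).trace) • U x) j k
        = ∑ x ∈ s, (d:ℂ) * (∑ p, ∑ q, M q p * ((w x : ℂ) * (U x j k * conj (U x q p)))) := by
          simp only [Matrix.sum_apply, Matrix.smul_apply, smul_eq_mul, h1, Finset.mul_sum,
            Finset.sum_mul]
          refine Finset.sum_congr rfl fun x _ => Finset.sum_congr rfl fun p _ =>
            Finset.sum_congr rfl fun q _ => ?_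
          ring
      _ = (d:ℂ) * ∑ p, ∑ q, M q p * (∑ x ∈ s, (w x : ℂ) * (U x j k * conj (U x q p))) := by
          rw [← Finset.mul_sum]
          congr 1
          rw [Finset.sum_comm]
          refine Finset.sum_congr rfl fun p _ => ?_
          rw [Finset.sum_comm]
          refine Finset.sum_congr rfl fun q _ => ?_
          rw [Finset.mul_sum]
      _ = M j k := by
          have : ∀ p q, (∑ x ∈ s, (w x : ℂ) * (U x j k * conj (U x q p)))
              = if j = q ∧ p = k then ((d : ℂ))⁻¹ else 0 := fun p q => hdes j k p q
          simp only [this, mul_ite, mul_zero, ite_and]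
          simp only [Finset.sum_ite_eq, Finset.mem_univ, if_true]
          simp only [Finset.sum_ite_eq', Finset.mem_univ, if_true]
          field_simp
  have hfr : Module.finrank ℂ (Matrix (Fin d) (Fin d) ℂ) = d ^ 2 := by
    rw [Module.finrank_matrix]
    simp [sq]
  set t : Finset (Matrix (Fin d) (Fin d) ℂ) := s.image U with htdef
  have hspan : Submodule.span ℂ (t : Set (Matrix (Fin d) (Fin d) ℂ)) = ⊤ := by
    rw [eq_top_iff]
    intro M _
    rw [← key M]
    exact Submodule.sum_mem _ fun x hx => Submodule.smul_mem _ _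
      (Submodule.subset_span (Finset.mem_coe.mpr (Finset.mem_image_of_mem U hx)))
  have hineq : d ^ 2 ≤ s.card := by
    have h1 := finrank_span_finset_le_card (R := ℂ) t
    rw [Set.finrank] at h1
    rw [hspan, finrank_top, hfr] at h1
    exact h1.trans (Finset.card_image_le)
  refine ⟨hineq, fun hcard => ?_⟩
  -- equality case
  have hcard' : Fintype.card ↥s = d ^ 2 := by simp [hcard]
  have hrange : Set.range (fun x : ↥s => U ↑x) = (t : Set (Matrix (Fin d) (Fin d) ℂ)) := by
    rw [htdef, Finset.coe_image]
    ext M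
    simp [Set.range_comp (f := fun x : ↥s => (↑x : Matrix.unitaryGroup (Fin d) ℂ))]
  have hle : ⊤ ≤ Submodule.span ℂ (Set.range (fun x : ↥s => U ↑x)) := by
    rw [hrange, hspan]
  have hli : LinearIndependent ℂ (fun x : ↥s => U ↑x) := by
    have hb := coe_basisOfTopLeSpanOfCardEqFinrank (fun x : ↥s => U ↑x) hle
      (hcard'.trans hfr.symm)
    rw [← hb]
    exact (basisOfTopLeSpanOfCardEqFinrank _ hle (hcard'.trans hfr.symm)).linearIndependent
  -- coefficients are unique
  have hcoef : ∀ y ∈ s, ∀ x ∈ s,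
      (d : ℂ) * (w x : ℂ) * ((U x)ᴴ * U y).trace = if x = y then 1 else 0 := by
    intro y hy x hx
    have e1 : ∑ z : ↥s, ((d : ℂ) * (w ↑z : ℂ) * ((U ↑z)ᴴ * U y).trace) • U ↑z = U y := by
      rw [Finset.sum_coe_sort s (fun z => ((d : ℂ) * (w z : ℂ) * ((U z)ᴴ * U y).trace) • U z)]
      exact key (U y)
    have e2 : ∑ z : ↥s, (if (↑z : Matrix.unitaryGroup (Fin d) ℂ) = y then (1:ℂ) else 0) • U ↑z
        = U y := by
      rw [Finset.sum_coe_sort s (fun z => (if z = y then (1:ℂ) else 0) • U z)]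
      simp [Finset.sum_ite_eq', hy]
    have e3 : ∑ z : ↥s, (((d : ℂ) * (w ↑z : ℂ) * ((U ↑z)ᴴ * U y).trace)
        - (if (↑z : Matrix.unitaryGroup (Fin d) ℂ) = y then (1:ℂ) else 0)) • U ↑z = 0 := by
      simp only [sub_smul, Finset.sum_sub_distrib, e1, e2, sub_self]
    have := Fintype.linearIndependent_iff.mp hli _ e3 ⟨x, hx⟩
    have h4 := sub_eq_zero.mp this
    simpa using h4
  constructor
  · intro x hx y hy hxy
    have h5 := hcoef y hy x hx
    rw [if_neg hxy] at h5
    have hwx : ((w x : ℝ) : ℂ) ≠ 0 := by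
      exact_mod_cast (hw x hx).ne'
    have h6 : (d : ℂ) * (w x : ℂ) ≠ 0 := mul_ne_zero hd0 hwx
    have := (mul_eq_zero.mp h5).resolve_left h6
    simpa [U] using this
  · intro x hx
    have h5 := hcoef x hx x hx
    rw [if_pos rfl] at h5
    have hunit : (U x)ᴴ * U x = 1 := by
      have := x.prop.1
      rwa [Matrix.star_eq_conjTranspose] at this
    rw [hunit, Matrix.trace_one] at h5
    simp only [Fintype.card_fin] at h5
    have h6 : ((w x : ℝ) : ℂ) = ((1 / (d^2 : ℝ) : ℝ) : ℂ) := by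
      push_cast
      field_simp at h5 ⊢
      linear_combination h5
    have h7 : w x = 1 / (d^2 : ℝ) := by exact_mod_cast h6
    rw [h7, hcard]
    push_cast
    ring
end

section
/- Two unitary operator bases {U_j} and {V_k} of M_d(ℂ) are mutually unbiased if and only if the subspaces spanned by {|U_j⟩⟨U_j| − I/d²}_j and {|V_k⟩⟨V_k| − I/d²}_k in the space of traceless Hermitian operators are orthogonal, since ⟨⟨ϑ(U_j)|ϑ(V_k)⟩⟩ = |tr(U_j†V_k)|²/d² − 1/d². -/
open Matrix
open scoped ComplexConjugate

/-!
Writing `u = vec Uᵀ` for the vectorisation of `U`, we have `ϑ(U) = d⁻¹ |u⟩⟨u| − d⁻² I` with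
`⟨u|u⟩ = tr(U†U) = d` and `⟨u|v⟩ = tr(U†V)`. Expanding `tr(ϑ(U) ϑ(V))` gives
`d⁻² |tr(U†V)|² − d⁻² − d⁻² + d⁻²`, which vanishes exactly when `|tr(U†V)|² = 1`.
-/

/-- `ϑ(U) = |U⟩⟨U| − I/d²`, where `|U⟩ = (U ⊗ I)(1/√d)∑ₖ|k⟩⊗|k⟩`, so that
`(|U⟩⟨U|) (p, q) = (1/d) U p₁ p₂ · conj (U q₁ q₂)`. -/
noncomputable def thet {d : ℕ} (U : Matrix (Fin d) (Fin d) ℂ) :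
    Matrix (Fin d × Fin d) (Fin d × Fin d) ℂ :=
  (Matrix.of fun p q => ((d : ℂ))⁻¹ * U p.1 p.2 * conj (U q.1 q.2))
    - ((d : ℂ) ^ 2)⁻¹ • (1 : Matrix (Fin d × Fin d) (Fin d × Fin d) ℂ)

namespace Matrix

variable {m n R : Type*} [Fintype m] [Fintype n]

theorem star_vec_transpose_dotProduct_vec_transpose [CommSemiring R] [StarRing R]
    (A B : Matrix m n R) : star (vec Aᵀ) ⬝ᵥ vec Bᵀ = (Aᴴ * B).trace := by
  rw [star_vec_dotProduct_vec, ← trace_transpose, transpose_mul, transpose_transpose,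
    trace_mul_comm, conjTranspose_transpose]
  rfl

theorem trace_vecMulVec_mul_vecMulVec [CommSemiring R] (u w v x : m → R) :
    (vecMulVec u w * vecMulVec v x).trace = (w ⬝ᵥ v) * (u ⬝ᵥ x) := by
  rw [vecMulVec_mul_vecMulVec, trace_vecMulVec, dotProduct_smul, smul_eq_mul]

theorem UnitaryGroup.trace_conjTranspose_mul_self [DecidableEq n] [CommRing R] [StarRing R]
    (A : unitaryGroup n R) : ((A : Matrix n n R)ᴴ * A).trace = Fintype.card n := by
  rw [← star_eq_conjTranspose, UnitaryGroup.star_mul_self, trace_one]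

end Matrix

theorem thet_eq_smul_vecMulVec_sub {d : ℕ} (U : Matrix (Fin d) (Fin d) ℂ) :
    thet U = (d : ℂ)⁻¹ • vecMulVec (vec Uᵀ) (star (vec Uᵀ)) - ((d : ℂ) ^ 2)⁻¹ • 1 := by
  refine congrArg (· - _) (ext fun p q => ?_)
  simp [vecMulVec_apply, vec, mul_assoc]

theorem isHermitian_thet {d : ℕ} (U : Matrix (Fin d) (Fin d) ℂ) : (thet U).IsHermitian := by
  rw [IsHermitian, thet_eq_smul_vecMulVec_sub]
  simp [conjTranspose_sub, conjTranspose_smul, conjTranspose_vecMulVec]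

theorem trace_conjTranspose_thet_mul_thet {d : ℕ} (hd : d ≠ 0) {U V : Matrix (Fin d) (Fin d) ℂ}
    (hU : (Uᴴ * U).trace = d) (hV : (Vᴴ * V).trace = d) :
    ((thet U)ᴴ * thet V).trace
      = ((‖(Uᴴ * V).trace‖ ^ 2 / (d : ℝ) ^ 2 - 1 / (d : ℝ) ^ 2 : ℝ) : ℂ) := by
  have norm_sq_vec {W : Matrix (Fin d) (Fin d) ℂ} (hW : (Wᴴ * W).trace = d) :
      vec Wᵀ ⬝ᵥ star (vec Wᵀ) = d := by
    rw [dotProduct_comm, star_vec_transpose_dotProduct_vec_transpose, hW]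
  have overlap : star (vec Uᵀ) ⬝ᵥ vec Vᵀ * (vec Uᵀ ⬝ᵥ star (vec Vᵀ))
      = (‖(Uᴴ * V).trace‖ ^ 2 : ℝ) := by
    rw [dotProduct_star, dotProduct_comm (vec Vᵀ), star_vec_transpose_dotProduct_vec_transpose,
      Complex.ofReal_pow, ← Complex.mul_conj']
    rfl
  rw [(isHermitian_thet U).eq, thet_eq_smul_vecMulVec_sub, thet_eq_smul_vecMulVec_sub]
  simp only [sub_mul, mul_sub, Matrix.smul_mul, Matrix.mul_smul, one_mul, mul_one, smul_smul,
    trace_sub, trace_smul, trace_vecMulVec_mul_vecMulVec, trace_vecMulVec, trace_one,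
    Fintype.card_prod, Fintype.card_fin, smul_eq_mul, overlap, norm_sq_vec hU, norm_sq_vec hV]
  push_cast
  field_simp
  ring

theorem mutually_unbiased_iff_orthogonal_general (d : ℕ)
    (U V : Fin (d ^ 2) → Matrix.unitaryGroup (Fin d) ℂ) :
    (∀ j k, ((thet (U j : Matrix (Fin d) (Fin d) ℂ))ᴴ * thet (V k : Matrix (Fin d) (Fin d) ℂ)).trace
        = ((‖((U j : Matrix (Fin d) (Fin d) ℂ)ᴴ * (V k : Matrix (Fin d) (Fin d) ℂ)).trace‖ ^ 2
            / (d : ℝ) ^ 2 - 1 / (d : ℝ) ^ 2 : ℝ) : ℂ)) ∧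
    ((∀ j k, ‖((U j : Matrix (Fin d) (Fin d) ℂ)ᴴ * (V k : Matrix (Fin d) (Fin d) ℂ)).trace‖ ^ 2 = 1)
      ↔ ∀ j k, ((thet (U j : Matrix (Fin d) (Fin d) ℂ))ᴴ * thet (V k : Matrix (Fin d) (Fin d) ℂ)).trace = 0) := by
  have d_ne_zero (j : Fin (d ^ 2)) : d ≠ 0 := by
    rintro rfl
    exact j.elim0
  have trace_unitary (W : unitaryGroup (Fin d) ℂ) :
      ((W : Matrix (Fin d) (Fin d) ℂ)ᴴ * W).trace = d := by
    rw [UnitaryGroup.trace_conjTranspose_mul_self, Fintype.card_fin]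
  have inner_eq j k :=
    trace_conjTranspose_thet_mul_thet (d_ne_zero j) (trace_unitary (U j)) (trace_unitary (V k))
  refine ⟨inner_eq, forall₂_congr fun j k => ?_⟩
  have hd2 : ((d : ℝ) ^ 2) ≠ 0 := pow_ne_zero 2 (Nat.cast_ne_zero.mpr (d_ne_zero j))
  rw [inner_eq, Complex.ofReal_eq_zero, ← sub_div, div_eq_zero_iff, or_iff_left hd2, sub_eq_zero]

/-- Two unitary operator bases `{U_j}` and `{V_k}` of `M_d(ℂ)` are mutually unbiased
if and only if the subspaces spanned by `{ϑ(U_j)}` and `{ϑ(V_k)}` are orthogonal,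
since the Hilbert–Schmidt inner product satisfies
`⟨⟨ϑ(U_j)|ϑ(V_k)⟩⟩ = |tr(U_j†V_k)|²/d² − 1/d²`. -/
theorem mutually_unbiased_iff_orthogonal (d : ℕ) (hd : 0 < d)
    (U V : Fin (d ^ 2) → Matrix.unitaryGroup (Fin d) ℂ)
    (hU : ∀ j k, ((U j : Matrix (Fin d) (Fin d) ℂ)ᴴ * (U k : Matrix (Fin d) (Fin d) ℂ)).trace
      = if j = k then (d : ℂ) else 0)
    (hV : ∀ j k, ((V j : Matrix (Fin d) (Fin d) ℂ)ᴴ * (V k : Matrix (Fin d) (Fin d) ℂ)).trace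
      = if j = k then (d : ℂ) else 0) :
    (∀ j k, ((thet (U j : Matrix (Fin d) (Fin d) ℂ))ᴴ * thet (V k : Matrix (Fin d) (Fin d) ℂ)).trace
        = ((‖((U j : Matrix (Fin d) (Fin d) ℂ)ᴴ * (V k : Matrix (Fin d) (Fin d) ℂ)).trace‖ ^ 2
            / (d : ℝ) ^ 2 - 1 / (d : ℝ) ^ 2 : ℝ) : ℂ)) ∧
    ((∀ j k, ‖((U j : Matrix (Fin d) (Fin d) ℂ)ᴴ * (V k : Matrix (Fin d) (Fin d) ℂ)).trace‖ ^ 2 = 1)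
      ↔ ∀ j k, ((thet (U j : Matrix (Fin d) (Fin d) ℂ))ᴴ * thet (V k : Matrix (Fin d) (Fin d) ℂ)).trace = 0) :=
  mutually_unbiased_iff_orthogonal_general d U V
end

section
/- At most d²−1 unitary operator bases of M_d(ℂ) can be pairwise mutually unbiased. -/
/-!
Send a unitary `U` to the rank-one operator `|U⟩⟩⟨⟨U|` on `ℂᵈ ⊗ ℂᵈ`, viewed as a vector in the
`d⁴`-dimensional Hilbert–Schmidt space. Its inner product with `|V⟩⟩⟨⟨V|` is `|tr(U†V)|²`, so one
unitary operator basis gives `d²` orthogonal nonzero vectors, and vectors from two mutually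
unbiased bases all have inner product `1`. Hence the differences `|U_j⟩⟩⟨⟨U_j| - |U_0⟩⟩⟨⟨U_0|`
span a `(d² - 1)`-dimensional subspace for each basis, and these subspaces are pairwise
orthogonal. Both partial traces of `|U⟩⟩⟨⟨U|` are the identity, so the differences are also
orthogonal to the `(2d² - 1)`-dimensional span of the operators `A ⊗ 1` and `1 ⊗ A`. Counting
dimensions, `m (d² - 1) + 2d² - 1 ≤ d⁴`, i.e. `m ≤ d² - 1`.
-/

open Matrix Module Submodule Set ComplexConjugate
open scoped Kronecker InnerProductSpace ComplexOrder

section InnerProductSpace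

variable {𝕜 E : Type*} [RCLike 𝕜] [NormedAddCommGroup E] [InnerProductSpace 𝕜 E]

theorem linearIndependent_sigma_of_inner_eq_zero {ι : Type*} {κ : ι → Type*}
    {f : ∀ a, κ a → E} (hf : ∀ a, LinearIndependent 𝕜 (f a))
    (horth : ∀ a b, a ≠ b → ∀ j k, ⟪f a j, f b k⟫_𝕜 = 0) :
    LinearIndependent 𝕜 fun p : Σ a, κ a => f p.1 p.2 := by
  have hind : iSupIndep fun a => span 𝕜 (range (f a)) :=
    (orthogonalFamily_iff_pairwise.mpr fun a b hab =>
      isOrtho_span.mpr <| by rintro _ ⟨j, rfl⟩ _ ⟨k, rfl⟩; exact horth a b hab j k).independent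
  exact linearIndependent_iUnion_finite hf fun a t _ hat =>
    (hind a).mono_right <| biSup_mono fun b hb => ne_of_mem_of_not_mem hb hat

theorem card_mul_add_card_le_finrank [FiniteDimensional 𝕜 E] {ι κ τ : Type*}
    [Fintype ι] [Fintype κ] [Nonempty κ] [Fintype τ] {v : ι → κ → E} {e : τ → E} {c : 𝕜}
    (hv : ∀ a, Pairwise fun j k => ⟪v a j, v a k⟫_𝕜 = 0) (hv0 : ∀ a j, v a j ≠ 0)
    (hcross : ∀ a b, a ≠ b → ∀ j k, ⟪v a j, v b k⟫_𝕜 = c)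
    (he : LinearIndependent 𝕜 e) (hve : ∀ a j k t, ⟪v a j, e t⟫_𝕜 = ⟪v a k, e t⟫_𝕜) :
    Fintype.card ι * (Fintype.card κ - 1) + Fintype.card τ ≤ finrank 𝕜 E := by
  classical
  obtain ⟨j₀⟩ := ‹Nonempty κ›
  have hw : LinearIndependent 𝕜 fun p : Σ _ : ι, {j // j ≠ j₀} => v p.1 p.2 - v p.1 j₀ := by
    refine linearIndependent_sigma_of_inner_eq_zero
      (f := fun a (j : {j // j ≠ j₀}) => v a j - v a j₀) (fun a => ?_) fun a b hab j k => ?_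
    · exact (affineIndependent_iff_linearIndependent_vsub 𝕜 (v a) j₀).mp
        (linearIndependent_of_ne_zero_of_inner_eq_zero (hv0 a) (hv a)).affineIndependent
    · simp only [inner_sub_left, inner_sub_right, hcross a b hab, sub_self]
  have hwe : span 𝕜 (range fun p : Σ _ : ι, {j // j ≠ j₀} => v p.1 p.2 - v p.1 j₀) ⟂
      span 𝕜 (range e) := isOrtho_span.mpr <| by
    rintro _ ⟨⟨a, j⟩, rfl⟩ _ ⟨t, rfl⟩
    rw [inner_sub_left, hve a j j₀ t, sub_self]
  simpa [Set.card_ne_eq] using (hw.sum_type he hwe.disjoint).fintype_card_le_finrank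

end InnerProductSpace

/-- A matrix as a vector of the Hilbert–Schmidt space: `⟪hsVec X, hsVec Y⟫ = tr(X† Y)`. -/
abbrev hsVec {ι ι' : Type*} (X : Matrix ι ι' ℂ) : EuclideanSpace ℂ (ι × ι') :=
  WithLp.toLp 2 (Function.uncurry X)

theorem inner_hsVec {ι ι' : Type*} [Fintype ι] [Fintype ι'] (X Y : Matrix ι ι' ℂ) :
    ⟪hsVec X, hsVec Y⟫_ℂ = ∑ x : ι × ι', conj (X x.1 x.2) * Y x.1 x.2 := by
  simp [PiLp.inner_apply, Function.uncurry, mul_comm]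

theorem inner_hsVec_vecMulVec_star {ι : Type*} [Fintype ι] (u v : ι → ℂ) :
    ⟪hsVec (vecMulVec u (star u)), hsVec (vecMulVec v (star v))⟫_ℂ
      = (‖star u ⬝ᵥ v‖ ^ 2 : ℝ) := by
  rw [← Complex.normSq_eq_norm_sq, ← Complex.mul_conj, dotProduct, map_sum, Finset.sum_mul_sum,
    inner_hsVec, Fintype.sum_prod_type]
  simp only [vecMulVec_apply, Pi.star_apply, RCLike.star_def, map_mul, Complex.conj_conj]
  exact Finset.sum_congr rfl fun p _ => Finset.sum_congr rfl fun q _ => by ring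

section KetBra

variable {n : Type*} [Fintype n]

/-- The operator `|U⟩⟩⟨⟨U|` on `ℂⁿ ⊗ ℂⁿ`, where `|U⟩⟩ = vec U`. -/
def ketBra (U : Matrix n n ℂ) : Matrix (n × n) (n × n) ℂ :=
  vecMulVec (vec U) (star (vec U))

theorem inner_hsVec_ketBra (U V : Matrix n n ℂ) :
    ⟪hsVec (ketBra U), hsVec (ketBra V)⟫_ℂ = (‖(Uᴴ * V).trace‖ ^ 2 : ℝ) := by
  rw [ketBra, ketBra, inner_hsVec_vecMulVec_star, star_vec_dotProduct_vec]

theorem hsVec_ketBra_ne_zero {U : Matrix n n ℂ} (hU : U ≠ 0) : hsVec (ketBra U) ≠ 0 := by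
  intro h
  have hself := inner_hsVec_ketBra U U
  rw [h, inner_zero_left, eq_comm] at hself
  exact hU (trace_conjTranspose_mul_self_eq_zero_iff.mp (by simpa using hself))

variable [DecidableEq n]

theorem inner_hsVec_ketBra_single_kronecker_one (U : Matrix n n ℂ) (i j : n) :
    ⟪hsVec (ketBra U), hsVec (single i j 1 ⊗ₖ 1)⟫_ℂ = (Uᴴ * U) i j := by
  simp [inner_hsVec, ketBra, vecMulVec_apply, Fintype.sum_prod_type, mul_apply, single_apply,
    one_apply, ite_and, mul_comm]

theorem inner_hsVec_ketBra_one_kronecker_single (U : Matrix n n ℂ) (i j : n) :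
    ⟪hsVec (ketBra U), hsVec (1 ⊗ₖ single i j 1)⟫_ℂ = (U * Uᴴ) j i := by
  simp [inner_hsVec, ketBra, vecMulVec_apply, Fintype.sum_prod_type, mul_apply, single_apply,
    one_apply, ite_and, mul_comm]

/-- A basis of the span of the operators `A ⊗ 1` and `1 ⊗ A`: the inner products of an operator
with its members are the entries of its two partial traces. The member `1 ⊗ E_{i₀ i₀}` is left
out because `∑ i, E_{ii} ⊗ 1 = ∑ i, 1 ⊗ E_{ii}`. -/
def kroneckerOneFamily (i₀ : n) :
    (n × n) ⊕ {r : n × n // r ≠ (i₀, i₀)} → EuclideanSpace ℂ ((n × n) × (n × n)) :=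
  Sum.elim (fun c => hsVec (single c.1 c.2 1 ⊗ₖ 1)) fun r => hsVec (1 ⊗ₖ single r.1.1 r.1.2 1)

theorem inner_hsVec_ketBra_kroneckerOneFamily_eq {U V : Matrix n n ℂ}
    (hU : U ∈ unitaryGroup n ℂ) (hV : V ∈ unitaryGroup n ℂ) (i₀ : n)
    (t : (n × n) ⊕ {r : n × n // r ≠ (i₀, i₀)}) :
    ⟪hsVec (ketBra U), kroneckerOneFamily i₀ t⟫_ℂ
      = ⟪hsVec (ketBra V), kroneckerOneFamily i₀ t⟫_ℂ := by
  rcases t with c | r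
  · simp only [kroneckerOneFamily, Sum.elim_inl, inner_hsVec_ketBra_single_kronecker_one,
      ← star_eq_conjTranspose, mem_unitaryGroup_iff'.mp hU, mem_unitaryGroup_iff'.mp hV]
  · simp only [kroneckerOneFamily, Sum.elim_inr, inner_hsVec_ketBra_one_kronecker_single,
      ← star_eq_conjTranspose, mem_unitaryGroup_iff.mp hU, mem_unitaryGroup_iff.mp hV]

theorem linearIndependent_kroneckerOneFamily (i₀ : n) :
    LinearIndependent ℂ (kroneckerOneFamily i₀) := by
  rw [Fintype.linearIndependent_iff]
  intro g hg
  have hpt : ∀ x, ∑ t, g t * kroneckerOneFamily i₀ t x = 0 := fun x => by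
    simpa using congrArg (· x) hg
  have hoff : ∀ r : {r : n × n // r ≠ (i₀, i₀)}, ¬(r.1.1 = i₀ ∧ r.1.2 = i₀) :=
    fun r h => r.2 (Prod.ext h.1 h.2)
  have hinl : ∀ c, g (Sum.inl c) = 0 := fun c => by
    simpa [kroneckerOneFamily, Fintype.sum_sum_type, Function.uncurry, single_apply, one_apply,
      ← Prod.ext_iff, hoff] using hpt ((c.1, i₀), (c.2, i₀))
  have hinr : ∀ r, g (Sum.inr r) = 0 := fun r => by
    simpa [kroneckerOneFamily, Fintype.sum_sum_type, Function.uncurry, single_apply, one_apply,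
      hinl, ← Prod.ext_iff, Subtype.coe_inj] using hpt ((i₀, r.1.1), (i₀, r.1.2))
  rintro (c | r)
  exacts [hinl c, hinr r]

end KetBra

/-- At most `d² − 1` unitary operator bases of `M_d(ℂ)` can be pairwise mutually
unbiased: if `B₀, …, B_{m−1}` are unitary operator bases (`tr(U_j†U_k) = d δ_{jk}`
within each basis) with `|tr(U†V)|² = 1` for all elements `U, V` of distinct bases,
then `m ≤ d² − 1`. -/
theorem card_mutually_unbiased_unitary_bases_le (d m : ℕ) (hd : 1 < d)
    (B : Fin m → Fin (d ^ 2) → Matrix.unitaryGroup (Fin d) ℂ)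
    (hbasis : ∀ a, ∀ j k : Fin (d ^ 2),
      ((B a j : Matrix (Fin d) (Fin d) ℂ)ᴴ * (B a k : Matrix (Fin d) (Fin d) ℂ)).trace
        = if j = k then (d : ℂ) else 0)
    (hmub : ∀ a b, a ≠ b → ∀ j k : Fin (d ^ 2),
      ‖((B a j : Matrix (Fin d) (Fin d) ℂ)ᴴ * (B b k : Matrix (Fin d) (Fin d) ℂ)).trace‖ ^ 2
        = 1) :
    m ≤ d ^ 2 - 1 := by
  have : NeZero d := ⟨by omega⟩
  let v a j := hsVec (ketBra (B a j : Matrix (Fin d) (Fin d) ℂ))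
  have horth : ∀ a, Pairwise fun j k => ⟪v a j, v a k⟫_ℂ = 0 := fun a j k hjk => by
    simp [v, inner_hsVec_ketBra, hbasis, hjk]
  have hne : ∀ a j, v a j ≠ 0 := fun a j => hsVec_ketBra_ne_zero fun h =>
    NeZero.ne d (by simpa [h, eq_comm] using hbasis a j j)
  have hcross : ∀ a b, a ≠ b → ∀ j k, ⟪v a j, v b k⟫_ℂ = 1 := fun a b hab j k => by
    rw [inner_hsVec_ketBra, hmub a b hab, Complex.ofReal_one]
  have key := card_mul_add_card_le_finrank horth hne hcross
    (linearIndependent_kroneckerOneFamily 0)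
    fun a j k => inner_hsVec_ketBra_kroneckerOneFamily_eq (B a j).2 (B a k).2 0
  simp only [Fintype.card_sum, Fintype.card_prod, Fintype.card_fin, Fintype.card_subtype_compl,
    Fintype.card_unique, finrank_euclideanSpace, ← sq] at key
  obtain ⟨N, hN⟩ := Nat.exists_eq_add_of_lt (Nat.one_lt_pow two_ne_zero hd)
  rw [hN] at key ⊢
  simp only [Nat.add_sub_cancel] at key ⊢
  nlinarith
end
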